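/- In an e-ring, for projections p,q: q−p ∈ E iff p ≤ q iff q−p ∈ P; and when p ≤ q, q−p is the infimum in E of q and 1−p. -/

import Mathlib

/-- An e-ring: an associative unital ring `R` together with a set `E` of effects.
`E⁺` is the additive submonoid generated by `E` (the set of finite sums of effects). -/
structure ERing (R : Type*) [Ring R] where
  E : Set R
  zero_mem : (0:R) ∈ E
  one_mem : (1:R) ∈ E
  compl_mem : ∀ e ∈ E, 1 - e ∈ E
  ax_i : ∀ a ∈ AddSubmonoid.closure E, -a ∈ AddSubmonoid.closure E → a = 0
  ax_ii : ∀ a ∈ AddSubmonoid.closure E, 1 - a ∈ AddSubmonoid.closure E → a ∈ E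
  ax_iii : ∀ a ∈ AddSubmonoid.closure E, ∀ b ∈ AddSubmonoid.closure E,
    a * b = b * a → a * b ∈ AddSubmonoid.closure E
  ax_iv : ∀ a ∈ AddSubmonoid.closure E, ∀ b ∈ AddSubmonoid.closure E,
    a * b * a ∈ AddSubmonoid.closure E
  ax_v : ∀ a ∈ AddSubmonoid.closure E, ∀ b ∈ AddSubmonoid.closure E,
    a * b * a = 0 → a * b = 0 ∧ b * a = 0
  ax_vi : ∀ a ∈ AddSubmonoid.closure E, ∀ b ∈ AddSubmonoid.closure E,
    (a - b) * (a - b) ∈ AddSubmonoid.closure E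

namespace ERing

variable {R : Type*} [Ring R]

/-- The positive cone `E⁺`: all finite sums of effects. -/
def Ep (S : ERing R) : Set R := (AddSubmonoid.closure S.E : Set R)

/-- The directed group `G = E⁺ − E⁺` (as a subset of `R`). -/
def G (S : ERing R) : Set R := {x | ∃ a ∈ S.Ep, ∃ b ∈ S.Ep, x = a - b}

/-- The partial order with positive cone `E⁺`: `g ≤ h` iff `h − g ∈ E⁺`. -/
def le (S : ERing R) (g h : R) : Prop := h - g ∈ S.Ep

/-- The set of projections: idempotent elements of `G`. -/
def P (S : ERing R) : Set R := {p | p ∈ S.G ∧ p * p = p}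

end ERing

/-!
Projections are effects: writing `p = a - b` with `a, b ∈ E⁺`, both `p = (a - b)²` and
`1 - p = (1 + b - a)²` lie in `E⁺`. The key fact is that a projection `p` kills every
`a ∈ E⁺` with `a ≤ 1 - p`: then `p a p` is both `≥ 0` and `≤ p (1 - p) p = 0`, so `p a p = 0`,
and axiom (v) gives `p a = a p = 0`. For `a = 1 - q` this says `p ≤ q` forces `p q = q p = p`,
so `q - p` is idempotent. For an effect `e ≤ q, 1 - p` it gives
`(1 - p) (q - e) (1 - p) = q - p - e`, which is positive by axiom (iv).
-/

namespace ERing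

variable {R : Type*} [Ring R] (S : ERing R)

lemma mem_Ep_of_mem_E {a : R} (h : a ∈ S.E) : a ∈ S.Ep :=
  AddSubmonoid.subset_closure h

lemma mem_E_of_mem_P {p : R} (hp : p ∈ S.P) : p ∈ S.E := by
  obtain ⟨⟨a, ha, b, hb, rfl⟩, hpp⟩ := hp
  have hp_pos : a - b ∈ S.Ep := hpp ▸ S.ax_vi a ha b hb
  have hb' : (1 : R) + b ∈ S.Ep :=
    AddSubmonoid.add_mem _ (S.mem_Ep_of_mem_E S.one_mem) hb
  have hsq : ((1 : R) + b - a) * (1 + b - a) = 1 - (a - b) := by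
    have h : ((1 : R) - (a - b)) * (1 - (a - b)) = 1 - (a - b) := by
      rw [sub_mul, one_mul, mul_sub, mul_one, hpp, sub_self, sub_zero]
    rw [← h]; congr 1 <;> abel
  exact S.ax_ii _ hp_pos (hsq ▸ S.ax_vi _ hb' a ha)

lemma mem_Ep_of_mem_P {p : R} (hp : p ∈ S.P) : p ∈ S.Ep :=
  S.mem_Ep_of_mem_E (S.mem_E_of_mem_P hp)

lemma one_sub_mem_Ep_of_mem_P {p : R} (hp : p ∈ S.P) : (1 : R) - p ∈ S.Ep :=
  S.mem_Ep_of_mem_E (S.compl_mem p (S.mem_E_of_mem_P hp))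

lemma sub_mem_E_iff_le {p q : R} (hp : p ∈ S.E) (hq : q ∈ S.E) : q - p ∈ S.E ↔ S.le p q := by
  refine ⟨S.mem_Ep_of_mem_E, fun h => S.ax_ii _ h ?_⟩
  rw [show (1 : R) - (q - p) = (1 - q) + p by abel]
  exact AddSubmonoid.add_mem _ (S.mem_Ep_of_mem_E (S.compl_mem q hq)) (S.mem_Ep_of_mem_E hp)

lemma mul_eq_zero_of_le_one_sub {p a : R} (hp : p ∈ S.P) (ha : a ∈ S.Ep)
    (h : S.le a (1 - p)) : p * a = 0 ∧ a * p = 0 := by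
  have hpEp := S.mem_Ep_of_mem_P hp
  have hconj : p * (1 - p - a) * p = -(p * a * p) := by
    rw [mul_sub, mul_sub, mul_one, hp.2, sub_self, zero_sub, neg_mul]
  have hpap : p * a * p = 0 := S.ax_i _ (S.ax_iv p hpEp a ha) (hconj ▸ S.ax_iv p hpEp _ h)
  exact S.ax_v p hpEp a ha hpap

lemma mul_eq_left_of_le {p q : R} (hp : p ∈ S.P) (hq : q ∈ S.P) (h : S.le p q) :
    p * q = p ∧ q * p = p := by
  have hle : S.le (1 - q) (1 - p) := by
    show (1 - p) - (1 - q) ∈ S.Ep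
    rwa [sub_sub_sub_cancel_left]
  obtain ⟨h₁, h₂⟩ := S.mul_eq_zero_of_le_one_sub hp (S.one_sub_mem_Ep_of_mem_P hq) hle
  rw [mul_sub, mul_one, sub_eq_zero] at h₁
  rw [sub_mul, one_mul, sub_eq_zero] at h₂
  exact ⟨h₁.symm, h₂.symm⟩

lemma le_iff_sub_mem_P {p q : R} (hp : p ∈ S.P) (hq : q ∈ S.P) : S.le p q ↔ q - p ∈ S.P := by
  have hpEp := S.mem_Ep_of_mem_P hp
  have hqEp := S.mem_Ep_of_mem_P hq
  constructor
  · intro h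
    obtain ⟨hpq, hqp⟩ := S.mul_eq_left_of_le hp hq h
    refine ⟨⟨q, hqEp, p, hpEp, rfl⟩, ?_⟩
    rw [mul_sub, sub_mul, sub_mul, hpq, hqp, hp.2, hq.2]
    abel
  · intro h
    show q - p ∈ S.Ep
    exact h.2 ▸ S.ax_vi q hqEp p hpEp

lemma le_sub_of_le_of_le_one_sub {p q e : R} (hp : p ∈ S.P) (hq : q ∈ S.P) (hle : S.le p q)
    (he : e ∈ S.Ep) (heq : S.le e q) (he_le : S.le e (1 - p)) : S.le e (q - p) := by
  obtain ⟨hpq, hqp⟩ := S.mul_eq_left_of_le hp hq hle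
  obtain ⟨hpe, hep⟩ := S.mul_eq_zero_of_le_one_sub hp he he_le
  have hleft : p * (q - e) = p := by rw [mul_sub, hpq, hpe, sub_zero]
  have hright : (q - e) * p = p := by rw [sub_mul, hqp, hep, sub_zero]
  have hconj : (1 - p) * (q - e) * (1 - p) = q - p - e := by
    rw [sub_mul, one_mul, hleft, sub_mul, mul_sub, mul_sub, mul_one, mul_one, hright, hp.2]
    abel
  show q - p - e ∈ S.Ep
  exact hconj ▸ S.ax_iv _ (S.one_sub_mem_Ep_of_mem_P hp) _ heq

end ERing

theorem stmt13 {R : Type*} [Ring R] (S : ERing R) :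
    ∀ p ∈ S.P, ∀ q ∈ S.P,
      ((q - p ∈ S.E ↔ S.le p q) ∧ (S.le p q ↔ q - p ∈ S.P)) ∧
      (S.le p q →
        q - p ∈ S.E ∧ S.le (q - p) q ∧ S.le (q - p) (1 - p) ∧
        ∀ e ∈ S.E, S.le e q → S.le e (1 - p) → S.le e (q - p)) := by
  intro p hp q hq
  have hE := S.sub_mem_E_iff_le (S.mem_E_of_mem_P hp) (S.mem_E_of_mem_P hq)
  refine ⟨⟨hE, S.le_iff_sub_mem_P hp hq⟩, fun hpq => ⟨hE.2 hpq, ?_, ?_, ?_⟩⟩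
  · show q - (q - p) ∈ S.Ep
    rw [sub_sub_cancel]
    exact S.mem_Ep_of_mem_P hp
  · show (1 - p) - (q - p) ∈ S.Ep
    rw [sub_sub_sub_cancel_right]
    exact S.one_sub_mem_Ep_of_mem_P hq
  · exact fun e he => S.le_sub_of_le_of_le_one_sub hp hq hpq (S.mem_Ep_of_mem_E he)
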